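/- arXiv:2402.11666 — 2 statements merged into one kernel-verified Lean document; each statement's English description precedes it below -/
import Mathlib

section
/- If M implements C, M' implements C', and C ∥ C' ≤ C'', then the composite M ∩ M' implements C''. -/
/-- If `M ⊨ (a,g)`, `M' ⊨ (a',g')`, and `(a,g) ∥ (a',g') ≤ (a'',g'')`, then
`M ∩ M' ⊨ (a'',g'')`. -/
theorem composite_implements_refined {B : Type*} (M M' a g a' g' a'' g'' : Set B)
    (hM : M ⊆ aᶜ ∪ g) (hM' : M' ⊆ a'ᶜ ∪ g')
    (href : a'' ⊆ (a ∩ a') ∪ (a ∩ gᶜ) ∪ (a' ∩ g'ᶜ) ∧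
      ((a ∩ a') ∪ (a ∩ gᶜ) ∪ (a' ∩ g'ᶜ))ᶜ ∪ ((aᶜ ∪ g) ∩ (a'ᶜ ∪ g')) ⊆ a''ᶜ ∪ g'') :
    M ∩ M' ⊆ a''ᶜ ∪ g'' := by
  intro x hx
  have h1 := hM hx.1
  have h2 := hM' hx.2
  exact href.2 (Or.inr ⟨h1, h2⟩)
end

section
/- Contract composition is monotone with respect to refinement: if C₁ ≤ C₁', then C₁ ∥ C₂ ≤ C₁' ∥ C₂. -/
/-- Composition is monotone with respect to refinement: if `(a₁,g₁) ≤ (a₁',g₁')`,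
then `(a₁,g₁) ∥ (a₂,g₂) ≤ (a₁',g₁') ∥ (a₂,g₂)`. -/
theorem composition_monotone {B : Type*} (a₁ g₁ a₁' g₁' a₂ g₂ : Set B)
    (h : a₁' ⊆ a₁ ∧ a₁ᶜ ∪ g₁ ⊆ a₁'ᶜ ∪ g₁') :
    ((a₁' ∩ a₂) ∪ (a₁' ∩ g₁'ᶜ) ∪ (a₂ ∩ g₂ᶜ) ⊆ (a₁ ∩ a₂) ∪ (a₁ ∩ g₁ᶜ) ∪ (a₂ ∩ g₂ᶜ)) ∧
    (((a₁ ∩ a₂) ∪ (a₁ ∩ g₁ᶜ) ∪ (a₂ ∩ g₂ᶜ))ᶜ ∪ ((a₁ᶜ ∪ g₁) ∩ (a₂ᶜ ∪ g₂)) ⊆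
      ((a₁' ∩ a₂) ∪ (a₁' ∩ g₁'ᶜ) ∪ (a₂ ∩ g₂ᶜ))ᶜ ∪ ((a₁'ᶜ ∪ g₁') ∩ (a₂ᶜ ∪ g₂))) := by
  obtain ⟨h1, h2⟩ := h
  constructor <;> intro x hx <;>
    have hh1 := @h1 x <;> have hh2 := @h2 x <;>
    simp only [Set.mem_union, Set.mem_inter_iff, Set.mem_compl_iff] at * <;> tauto
end
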